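/- The monomials $z^p w^q$ with $p\in\mathbb{N}^n$, $q\in\mathbb{Z}$, and $|p|+k(q+1)>-n$ belong to $L^2(\Omega^{n+1}_k)$, i.e., $\int_{\Omega^{n+1}_k}|z^p|^2|w^q|^2\,dV<\infty$ precisely for this range of indices. -/

import Mathlib

open MeasureTheory

noncomputable instance (n : ℕ) : MeasurableSpace (EuclideanSpace ℂ (Fin n)) :=
  MeasurableSpace.comap WithLp.ofLp MeasurableSpace.pi

instance (n : ℕ) : BorelSpace (EuclideanSpace ℂ (Fin n)) := PiLp.borelSpace 2

noncomputable instance (n : ℕ) : MeasureSpace (EuclideanSpace ℂ (Fin n)) :=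
  ⟨Measure.map (WithLp.toLp 2) (Measure.pi fun _ : Fin n => (volume : Measure ℂ))⟩

/-- The generalized Hartogs triangle
`Ω^{n+1}_k = {(z,w) ∈ ℂⁿ × ℂ : |z|^k < |w| < 1}`. -/
def Omega (k n : ℕ) : Set (EuclideanSpace ℂ (Fin n) × ℂ) :=
  {x | ‖x.1‖ ^ k < ‖x.2‖ ∧ ‖x.2‖ < 1}

/-! For fixed `w` with `0 < |w| < 1` the slice of `Ω^{n+1}_k` is the ball `|z| < |w|^{1/k}`.
Since `|z^p|^2` is homogeneous of degree `2|p|` and Lebesgue measure on `ℂⁿ` scales with degree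
`2n`, the slice integral is `|w|^{(2|p|+2n)/k}` times the integral over the unit ball, which is
finite and positive. By Tonelli the whole integral is therefore a positive finite multiple of
`∫_{|w|<1} |w|^{(2|p|+2n)/k + 2q} dV(w)`, and this is finite iff the exponent exceeds `-2`, the real
dimension of `ℂ`; that is, iff `|p| + k(q+1) > -n`. -/

open Metric Module Set
open scoped ENNReal Pointwise

section Homogeneous

variable {E : Type*} [NormedAddCommGroup E] [NormedSpace ℝ E] [MeasurableSpace E] [BorelSpace E]
  [FiniteDimensional ℝ E] (μ : Measure E) [μ.IsAddHaarMeasure]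

theorem setLIntegral_ball_eq_of_homogeneous {f : E → ℝ≥0∞} {d : ℕ}
    (hf : ∀ r : ℝ, 0 < r → ∀ z, f (r • z) = ENNReal.ofReal (r ^ d) * f z)
    {R : ℝ} (hR : 0 < R) :
    ∫⁻ z in ball (0 : E) R, f z ∂μ =
      ENNReal.ofReal (R ^ (d + finrank ℝ E)) * ∫⁻ z in ball (0 : E) 1, f z ∂μ := by
  have hpre : (R • ·) ⁻¹' ball (0 : E) R = ball 0 1 := by
    rw [← smul_unitBall_of_pos hR, preimage_smul₀ hR.ne', inv_smul_smul₀ hR.ne']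
  have hmap : ∫⁻ z in ball (0 : E) R, f z ∂(μ.map (R • ·)) =
      ENNReal.ofReal (R ^ d) * ∫⁻ z in ball (0 : E) 1, f z ∂μ := by
    rw [Measure.restrict_map (measurable_const_smul R) measurableSet_ball,
      (measurableEmbedding_const_smul₀ hR.ne').lintegral_map, hpre,
      ← lintegral_const_mul' _ _ ENNReal.ofReal_ne_top]
    exact lintegral_congr fun z => hf R hR z
  rw [Measure.map_addHaar_smul μ hR.ne', Measure.restrict_smul, lintegral_smul_measure,
    abs_of_pos (by positivity)] at hmap
  rw [pow_add, ENNReal.ofReal_mul (by positivity), mul_comm (ENNReal.ofReal (R ^ d)), mul_assoc,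
    ← hmap, smul_eq_mul, ← mul_assoc, ← ENNReal.ofReal_mul (by positivity),
    mul_inv_cancel₀ (by positivity), ENNReal.ofReal_one, one_mul]

theorem setLIntegral_ball_norm_rpow_lt_top_iff [Nontrivial E] (s : ℝ) :
    ∫⁻ x in ball (0 : E) 1, ENNReal.ofReal (‖x‖ ^ s) ∂μ < ⊤ ↔ -(finrank ℝ E : ℝ) < s := by
  have hd : 1 ≤ finrank ℝ E := Module.finrank_pos
  have hm : Measurable fun x : E => ‖x‖ ^ s := by fun_prop
  rw [lt_top_iff_ne_top, lintegral_ofReal_ne_top_iff_integrable hm.aestronglyMeasurable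
      (ae_of_all _ fun x => by positivity), ← IntegrableOn,
    integrableOn_fun_norm_addHaar μ (f := fun y => y ^ s),
    integrableOn_congr_fun (g := fun y : ℝ => y ^ (s + (finrank ℝ E - 1 : ℕ))) _
      measurableSet_Ioo,
    intervalIntegral.integrableOn_Ioo_rpow_iff one_pos]
  · push_cast [hd]
    constructor <;> intro h <;> linarith
  · intro y hy
    dsimp only
    rw [smul_eq_mul, Real.rpow_add hy.1, Real.rpow_natCast, mul_comm]

end Homogeneous

instance EuclideanSpace.isAddHaarMeasure_volume (n : ℕ) :
    (volume : Measure (EuclideanSpace ℂ (Fin n))).IsAddHaarMeasure :=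
  Measure.MapLinearEquiv.isAddHaarMeasure (Measure.pi fun _ : Fin n => (volume : Measure ℂ))
    (WithLp.linearEquiv 2 ℝ (Fin n → ℂ)).symm

theorem EuclideanSpace.finrank_real_complex (n : ℕ) :
    finrank ℝ (EuclideanSpace ℂ (Fin n)) = 2 * n := by
  rw [← Module.finrank_mul_finrank ℝ ℂ, Complex.finrank_real_complex, finrank_euclideanSpace,
    Fintype.card_fin]

section Monomial

variable {ι : Type*} [Fintype ι] (e : ι → ℕ)

theorem continuous_prod_norm_pow :
    Continuous fun z : EuclideanSpace ℂ ι => ∏ i, ‖z i‖ ^ e i := by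
  fun_prop

theorem prod_norm_smul_pow (r : ℝ) (z : EuclideanSpace ℂ ι) :
    ∏ i, ‖(r • z) i‖ ^ e i = |r| ^ (∑ i, e i) * ∏ i, ‖z i‖ ^ e i := by
  simp only [PiLp.smul_apply, norm_smul, Real.norm_eq_abs, mul_pow, Finset.prod_mul_distrib,
    Finset.prod_pow_eq_pow_sum]

theorem ofReal_prod_norm_smul_pow {r : ℝ} (hr : 0 < r) (z : EuclideanSpace ℂ ι) :
    ENNReal.ofReal (∏ i, ‖(r • z) i‖ ^ e i) =
      ENNReal.ofReal (r ^ ∑ i, e i) * ENNReal.ofReal (∏ i, ‖z i‖ ^ e i) := by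
  rw [prod_norm_smul_pow, abs_of_pos hr, ENNReal.ofReal_mul (by positivity)]

end Monomial

section MonomialIntegral

variable {n : ℕ} (μ : Measure (EuclideanSpace ℂ (Fin n))) [μ.IsAddHaarMeasure]
  (e : Fin n → ℕ)

theorem setLIntegral_ball_prod_norm_pow_lt_top :
    ∫⁻ z in ball 0 1, ENNReal.ofReal (∏ i, ‖z i‖ ^ e i) ∂μ < ⊤ :=
  (((continuous_prod_norm_pow e).continuousOn.integrableOn_compact
    (isCompact_closedBall 0 1)).mono_set ball_subset_closedBall).lintegral_lt_top

theorem setLIntegral_ball_prod_norm_pow_pos :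
    0 < ∫⁻ z in ball 0 1, ENNReal.ofReal (∏ i, ‖z i‖ ^ e i) ∂μ := by
  set v : EuclideanSpace ℂ (Fin n) := WithLp.toLp 2 fun _ => 1
  set z₀ : EuclideanSpace ℂ (Fin n) := (‖v‖ + 1)⁻¹ • v
  have hz₀ : z₀ ∈ ball 0 1 := by
    rw [mem_ball_zero_iff, norm_smul, Real.norm_eq_abs, abs_of_pos (by positivity),
      inv_mul_lt_one₀ (by positivity)]
    exact lt_add_one _
  have hpos : 0 < ∏ i, ‖z₀ i‖ ^ e i := by
    have hv : ∀ i, ‖v i‖ = 1 := fun _ => norm_one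
    rw [prod_norm_smul_pow]
    simp only [hv, one_pow, Finset.prod_const_one, mul_one]
    positivity
  rw [lintegral_pos_iff_support (by fun_prop), Measure.restrict_apply' measurableSet_ball]
  refine (IsOpen.inter ?_ isOpen_ball).measure_pos _ ⟨z₀, ?_, hz₀⟩
  · simpa only [Function.support, ne_eq, ENNReal.ofReal_eq_zero, not_le] using
      isOpen_lt continuous_const (continuous_prod_norm_pow e)
  · simpa only [Function.mem_support, ne_eq, ENNReal.ofReal_eq_zero, not_le] using hpos

end MonomialIntegral

section Omega

variable {k n : ℕ}

theorem isOpen_Omega : IsOpen (Omega k n) :=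
  (isOpen_lt (continuous_fst.norm.pow k) continuous_snd.norm).inter
    (isOpen_lt continuous_snd.norm continuous_const)

theorem mk_mem_Omega_iff (hk : 0 < k) {z : EuclideanSpace ℂ (Fin n)} {w : ℂ} :
    (z, w) ∈ Omega k n ↔ w ∈ ball 0 1 ∧ z ∈ ball 0 (‖w‖ ^ (k⁻¹ : ℝ)) := by
  rw [mem_ball_zero_iff, mem_ball_zero_iff, Real.lt_rpow_inv_iff_of_pos (norm_nonneg _)
    (norm_nonneg _) (by positivity), Real.rpow_natCast, and_comm]
  rfl

variable {f : EuclideanSpace ℂ (Fin n) → ℝ≥0∞} {d : ℕ}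

theorem lintegral_indicator_Omega_mk (hk : 0 < k)
    (hf : ∀ r : ℝ, 0 < r → ∀ z, f (r • z) = ENNReal.ofReal (r ^ d) * f z) (t : ℝ)
    {w : ℂ} (hw : w ≠ 0) :
    ∫⁻ z, (Omega k n).indicator (fun x => f x.1 * ENNReal.ofReal (‖x.2‖ ^ t)) (z, w) =
      (ball 0 1).indicator (fun w => (∫⁻ z in ball 0 1, f z) *
        ENNReal.ofReal (‖w‖ ^ ((d + 2 * n : ℝ) / k + t))) w := by
  by_cases hw1 : w ∈ ball 0 1
  · have hρ : 0 < ‖w‖ ^ (k⁻¹ : ℝ) := by positivity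
    have hslice : ∀ z,
        (Omega k n).indicator (fun x => f x.1 * ENNReal.ofReal (‖x.2‖ ^ t)) (z, w) =
          (ball 0 (‖w‖ ^ (k⁻¹ : ℝ))).indicator f z * ENNReal.ofReal (‖w‖ ^ t) := by
      intro z
      by_cases hz : z ∈ ball 0 (‖w‖ ^ (k⁻¹ : ℝ))
      · rw [indicator_of_mem ((mk_mem_Omega_iff hk).2 ⟨hw1, hz⟩), indicator_of_mem hz]
      · rw [indicator_of_notMem (fun h => hz ((mk_mem_Omega_iff hk).1 h).2),
          indicator_of_notMem hz, zero_mul]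
    rw [lintegral_congr hslice, lintegral_mul_const' _ _ ENNReal.ofReal_ne_top,
      lintegral_indicator measurableSet_ball, setLIntegral_ball_eq_of_homogeneous volume hf hρ,
      indicator_of_mem hw1, EuclideanSpace.finrank_real_complex,
      mul_comm _ (∫⁻ z in ball 0 1, f z), mul_assoc, ← ENNReal.ofReal_mul (by positivity),
      ← Real.rpow_natCast, ← Real.rpow_mul (norm_nonneg _),
      ← Real.rpow_add (norm_pos_iff.2 hw)]
    push_cast
    ring_nf
  · rw [indicator_of_notMem hw1]
    exact (lintegral_congr fun z => indicator_of_notMem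
      (fun h => hw1 ((mk_mem_Omega_iff hk).1 h).1) _).trans lintegral_zero

theorem setLIntegral_Omega_mul_norm_rpow (hk : 0 < k) (hfm : Measurable f)
    (hf : ∀ r : ℝ, 0 < r → ∀ z, f (r • z) = ENNReal.ofReal (r ^ d) * f z) (t : ℝ) :
    ∫⁻ x in Omega k n, f x.1 * ENNReal.ofReal (‖x.2‖ ^ t) =
      (∫⁻ z in ball 0 1, f z) *
        ∫⁻ w in ball (0 : ℂ) 1, ENNReal.ofReal (‖w‖ ^ ((d + 2 * n : ℝ) / k + t)) := by
  have hF : Measurable fun x : EuclideanSpace ℂ (Fin n) × ℂ =>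
      f x.1 * ENNReal.ofReal (‖x.2‖ ^ t) :=
    (hfm.comp measurable_fst).mul (by fun_prop)
  rw [← lintegral_indicator isOpen_Omega.measurableSet, Measure.volume_eq_prod,
    lintegral_prod_symm _ (hF.indicator isOpen_Omega.measurableSet).aemeasurable,
    ← lintegral_const_mul _ (by fun_prop), ← lintegral_indicator measurableSet_ball]
  exact lintegral_congr_ae ((Measure.ae_ne volume 0).mono fun w hw =>
    lintegral_indicator_Omega_mk hk hf t hw)

end Omega

theorem monomial_mem_L2_iff_general (k n : ℕ) (hk : 0 < k)
    (p : Fin n → ℕ) (q : ℤ) :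
    (∫⁻ x in Omega k n,
        ENNReal.ofReal ((∏ i, ‖x.1 i‖ ^ (2 * p i)) * ‖x.2‖ ^ (2 * q : ℤ))) < ⊤ ↔
      (∑ i, (p i : ℤ)) + k * (q + 1) > -(n : ℤ) := by
  set J := ∫⁻ z in ball (0 : EuclideanSpace ℂ (Fin n)) 1,
    ENNReal.ofReal (∏ i, ‖z i‖ ^ (2 * p i))
  have hJ_pos : 0 < J := setLIntegral_ball_prod_norm_pow_pos volume _
  have hJ_lt_top : J < ⊤ := setLIntegral_ball_prod_norm_pow_lt_top volume _
  have hsplit : ∀ x : EuclideanSpace ℂ (Fin n) × ℂ,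
      ENNReal.ofReal ((∏ i, ‖x.1 i‖ ^ (2 * p i)) * ‖x.2‖ ^ (2 * q : ℤ)) =
        ENNReal.ofReal (∏ i, ‖x.1 i‖ ^ (2 * p i)) *
          ENNReal.ofReal (‖x.2‖ ^ ((2 * q : ℤ) : ℝ)) := fun x => by
    rw [Real.rpow_intCast, ENNReal.ofReal_mul (by positivity)]
  have hJ_mul : ∀ I, J * I < ⊤ ↔ I < ⊤ := fun I =>
    ⟨fun h => ENNReal.lt_top_of_mul_ne_top_right h.ne hJ_pos.ne', ENNReal.mul_lt_top hJ_lt_top⟩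
  simp_rw [hsplit]
  rw [setLIntegral_Omega_mul_norm_rpow (f := fun z => ENNReal.ofReal (∏ i, ‖z i‖ ^ (2 * p i)))
      hk (by fun_prop) (fun r hr => ofReal_prod_norm_smul_pow _ hr),
    hJ_mul, setLIntegral_ball_norm_rpow_lt_top_iff, Complex.finrank_real_complex,
    div_add' _ _ _ (by positivity), lt_div_iff₀ (by positivity), gt_iff_lt,
    ← Int.cast_lt (R := ℝ)]
  push_cast [← Finset.mul_sum]
  constructor <;> intro h <;> linarith

/-- The monomial `z^p w^q` is square-integrable on `Ω^{n+1}_k` exactly when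
`|p| + k (q+1) > -n`. -/
theorem monomial_mem_L2_iff (k n : ℕ) (hk : 0 < k) (hn : 0 < n)
    (p : Fin n → ℕ) (q : ℤ) :
    (∫⁻ x in Omega k n,
        ENNReal.ofReal ((∏ i, ‖x.1 i‖ ^ (2 * p i)) * ‖x.2‖ ^ (2 * q : ℤ))) < ⊤ ↔
      (∑ i, (p i : ℤ)) + k * (q + 1) > -(n : ℤ) :=
  monomial_mem_L2_iff_general k n hk p q
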